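/- The group Q₂₈ × C₁₃ is a Leinster group, where Q₂₈ is the dicyclic group of order 28. -/

import Mathlib

open scoped Classical

noncomputable def sigmaN (G : Type*) [Group G] [Fintype G] : ℕ :=
  ∑ H ∈ {H : Subgroup G | H.Normal}.toFinite.toFinset, Nat.card H

noncomputable def tauN (G : Type*) [Group G] [Fintype G] : ℕ :=
  {H : Subgroup G | H.Normal}.toFinite.toFinset.card

def IsLeinster (G : Type*) [Group G] [Fintype G] : Prop :=
  sigmaN G = 2 * Fintype.card G

/-!
The sum `σ(G)` of the orders of the normal subgroups is multiplicative over direct products of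
groups of coprime orders, since every subgroup of such a product is the product of its two
projections; so `σ(Q₂₈ × C₁₃) = σ(Q₂₈) σ(C₁₃)`. A cyclic group has exactly one subgroup of each
order dividing its own, so `σ(C₁₃) = σ₁(13) = 14`. For odd `n`, a normal subgroup of `Q₄ₙ`
containing some `xa j` also contains `a 1` and is everything, while every subgroup of the cyclic
subgroup `⟨a 1⟩ ≅ C₂ₙ` is normal; hence `σ(Q₄ₙ) = σ₁(2n) + 4n`, which is `24 + 28 = 52` for
`n = 7`. Finally `52 · 14 = 728 = 2 · 364`.
-/

section Cyclic
variable {G : Type*} [Group G] [Finite G] [IsCyclic G]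

lemma IsCyclic.subgroup_eq_setOf_pow_card_eq_one (H : Subgroup G) :
    (H : Set G) = {x | x ^ Nat.card H = 1} := by
  have := Fintype.ofFinite G
  refine Set.eq_of_subset_of_ncard_le (fun x hx => ?_) ?_
  · exact congrArg Subtype.val (pow_card_eq_one' (G := H) (x := ⟨x, hx⟩))
  · rw [← Nat.card_coe_set_eq (H : Set G), SetLike.coe_sort_coe, Set.ncard_eq_toFinset_card',
      Set.toFinset_ofPred]
    exact IsCyclic.card_pow_eq_one_le Nat.card_pos

lemma IsCyclic.subgroup_eq_of_card_eq {H K : Subgroup G} (h : Nat.card H = Nat.card K) : H = K :=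
  SetLike.coe_injective <| by
    rw [subgroup_eq_setOf_pow_card_eq_one, subgroup_eq_setOf_pow_card_eq_one, h]

lemma IsCyclic.exists_subgroup_card_eq {d : ℕ} (hd : d ∣ Nat.card G) :
    ∃ H : Subgroup G, Nat.card H = d := by
  obtain ⟨g, hg⟩ := IsCyclic.exists_ofOrder_eq_natCard (α := G)
  exact ⟨Subgroup.zpowers (g ^ (Nat.card G / d)), by
    rw [Nat.card_zpowers, ← hg, orderOf_pow_orderOf_div (hg ▸ Nat.card_pos.ne') (hg ▸ hd)]⟩

end Cyclic

lemma sigmaN_eq_sigma_card_of_isCyclic {G : Type*} [Group G] [Fintype G] [IsCyclic G] :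
    sigmaN G = ArithmeticFunction.sigma 1 (Fintype.card G) := by
  rw [ArithmeticFunction.sigma_one_apply, sigmaN, ← Nat.card_eq_fintype_card]
  refine Finset.sum_bij (fun H _ => Nat.card H) (fun H _ => ?_)
    (fun H _ K _ h => IsCyclic.subgroup_eq_of_card_eq h) (fun d hd => ?_) (fun _ _ => rfl)
  · exact Nat.mem_divisors.2 ⟨Subgroup.card_subgroup_dvd_card H, Nat.card_pos.ne'⟩
  · obtain ⟨H, hH⟩ := IsCyclic.exists_subgroup_card_eq (Nat.dvd_of_mem_divisors hd)
    exact ⟨H, by simp [Subgroup.normal_of_isMulCommutative], hH⟩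

lemma Subgroup.mem_of_pow_mem_of_coprime {G : Type*} [Group G] {H : Subgroup G} {g : G} {m : ℕ}
    (hm : m.Coprime (orderOf g)) (h : g ^ m ∈ H) : g ∈ H := by
  obtain ⟨k, hk⟩ := exists_pow_eq_self_of_coprime hm
  exact hk ▸ H.pow_mem h k

lemma Subgroup.map_fst_prod {A B : Type*} [Group A] [Group B] (H : Subgroup A) (K : Subgroup B) :
    (H.prod K).map (MonoidHom.fst A B) = H :=
  le_antisymm (fun _ ⟨_, hp, hx⟩ => hx ▸ hp.1) fun x hx => ⟨(x, 1), ⟨hx, K.one_mem⟩, rfl⟩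

lemma Subgroup.map_snd_prod {A B : Type*} [Group A] [Group B] (H : Subgroup A) (K : Subgroup B) :
    (H.prod K).map (MonoidHom.snd A B) = K :=
  le_antisymm (fun _ ⟨_, hp, hy⟩ => hy ▸ hp.2) fun y hy => ⟨(1, y), ⟨H.one_mem, hy⟩, rfl⟩

section CoprimeProduct
variable {A B : Type*} [Group A] [Group B] [Fintype A] [Fintype B]

lemma Subgroup.eq_prod_map_fst_snd_of_coprime (hAB : (Fintype.card A).Coprime (Fintype.card B))
    (H : Subgroup (A × B)) :
    H = (H.map (MonoidHom.fst A B)).prod (H.map (MonoidHom.snd A B)) := by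
  refine le_antisymm (fun p hp => ⟨⟨p, hp, rfl⟩, ⟨p, hp, rfl⟩⟩) ?_
  rintro ⟨x, y⟩ ⟨⟨⟨x, y'⟩, hxy', rfl⟩, ⟨⟨x', y⟩, hx'y, rfl⟩⟩
  have hx : (x, (1 : B)) ∈ H :=
    mem_of_pow_mem_of_coprime
      (hAB.symm.coprime_dvd_right (orderOf_dvd_of_pow_eq_one (by simp [pow_card_eq_one])))
      (by simpa [pow_card_eq_one] using H.pow_mem hxy' (Fintype.card B))
  have hy : ((1 : A), y) ∈ H :=
    mem_of_pow_mem_of_coprime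
      (hAB.coprime_dvd_right (orderOf_dvd_of_pow_eq_one (by simp [pow_card_eq_one])))
      (by simpa [pow_card_eq_one] using H.pow_mem hx'y (Fintype.card A))
  simpa using H.mul_mem hx hy

lemma sigmaN_prod_of_coprime (hAB : (Fintype.card A).Coprime (Fintype.card B)) :
    sigmaN (A × B) = sigmaN A * sigmaN B := by
  rw [sigmaN, sigmaN, sigmaN, Finset.sum_mul_sum, ← Finset.sum_product']
  refine Finset.sum_nbij' (fun H => (H.map (MonoidHom.fst A B), H.map (MonoidHom.snd A B)))
    (fun p => p.1.prod p.2) (fun H hH => ?_) (fun p hp => ?_) (fun H _ => ?_) (fun p _ => ?_)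
    (fun H _ => ?_)
  · simp only [Set.Finite.mem_toFinset, Set.mem_ofPred_eq, Finset.mem_product] at hH ⊢
    exact ⟨hH.map _ Prod.fst_surjective, hH.map _ Prod.snd_surjective⟩
  · simp only [Set.Finite.mem_toFinset, Set.mem_ofPred_eq, Finset.mem_product] at hp ⊢
    obtain ⟨_, _⟩ := hp
    infer_instance
  · exact (Subgroup.eq_prod_map_fst_snd_of_coprime hAB H).symm
  · simp only [Subgroup.map_fst_prod, Subgroup.map_snd_prod]
  · conv_lhs => rw [Subgroup.eq_prod_map_fst_snd_of_coprime hAB H]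
    rw [Nat.card_congr (Subgroup.prodEquiv _ _).toEquiv, Nat.card_prod]

end CoprimeProduct

namespace QuaternionGroup
variable {n : ℕ}

@[simp] lemma inv_a (i : ZMod (2 * n)) : (a i)⁻¹ = a (-i) := rfl

@[simp] lemma inv_xa (i : ZMod (2 * n)) : (xa i)⁻¹ = xa ((n : ZMod (2 * n)) + i) := rfl

def aHom (n : ℕ) : Multiplicative (ZMod (2 * n)) →* QuaternionGroup n where
  toFun i := a i.toAdd
  map_one' := a_zero
  map_mul' _ _ := (a_mul_a _ _).symm

@[simp] lemma aHom_apply (i : Multiplicative (ZMod (2 * n))) : aHom n i = a i.toAdd := rfl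

lemma aHom_injective : Function.Injective (aHom n) := fun i j h => by
  simpa using h

lemma xa_notMem_range_aHom (i : ZMod (2 * n)) : xa i ∉ (aHom n).range := by
  rintro ⟨j, h⟩
  exact nomatch h

lemma normal_map_aHom (K : Subgroup (Multiplicative (ZMod (2 * n)))) :
    (K.map (aHom n)).Normal := by
  constructor
  rintro _ ⟨i, hi, rfl⟩ (j | j)
  · exact ⟨i, hi, by simp⟩
  · refine ⟨i⁻¹, K.inv_mem hi, ?_⟩
    have h2n : ((2 * n : ℕ) : ZMod (2 * n)) = 0 := ZMod.natCast_self _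
    simp only [aHom_apply, toAdd_inv, xa_mul_a, inv_xa, xa_mul_xa, a.injEq]
    push_cast at h2n
    linear_combination -h2n

lemma eq_top_of_normal_of_xa_mem (hn : Odd n) {H : Subgroup (QuaternionGroup n)} [hH : H.Normal]
    {j : ZMod (2 * n)} (hj : xa j ∈ H) : H = ⊤ := by
  obtain ⟨m, rfl⟩ := hn
  -- `xa j` times its conjugate by `a m` is `a (n - 2m) = a 1`.
  have ha1 : a 1 ∈ H := by
    have := H.mul_mem hj (hH.conj_mem _ hj (a m))
    simp only [a_mul_xa, xa_mul_a, inv_a, xa_mul_xa] at this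
    convert this using 2
    push_cast
    ring
  have ha : ∀ i, a i ∈ H := fun i => by
    have : NeZero (2 * (2 * m + 1)) := ⟨by omega⟩
    simpa [a_one_pow] using H.pow_mem ha1 i.val
  rw [Subgroup.eq_top_iff']
  rintro (i | i)
  · exact ha i
  · simpa using H.mul_mem hj (ha (i - j))

lemma eq_top_or_le_range_aHom (hn : Odd n) (H : Subgroup (QuaternionGroup n)) [H.Normal] :
    H = ⊤ ∨ H ≤ (aHom n).range := by
  by_cases h : ∃ j, xa j ∈ H
  · obtain ⟨j, hj⟩ := h
    exact Or.inl (eq_top_of_normal_of_xa_mem hn hj)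
  · refine Or.inr fun g hg => ?_
    cases g with
    | a i => exact ⟨.ofAdd i, rfl⟩
    | xa j => exact absurd ⟨j, hg⟩ h

theorem sigmaN_eq_of_odd [NeZero n] (hn : Odd n) :
    sigmaN (QuaternionGroup n) = sigmaN (Multiplicative (ZMod (2 * n))) + 4 * n := by
  set T := {K : Subgroup (Multiplicative (ZMod (2 * n))) | K.Normal}.toFinite.toFinset
  have hS : {H : Subgroup (QuaternionGroup n) | H.Normal}.toFinite.toFinset =
      insert ⊤ (T.image (Subgroup.map (aHom n))) := by
    ext H
    simp only [T, Set.Finite.mem_toFinset, Set.mem_ofPred_eq, Finset.mem_insert, Finset.mem_image]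
    constructor
    · intro hH
      refine (eq_top_or_le_range_aHom hn H).imp id fun h => ?_
      exact ⟨_, Subgroup.normal_of_isMulCommutative _, Subgroup.map_comap_eq_self h⟩
    · rintro (rfl | ⟨K, -, rfl⟩)
      · infer_instance
      · exact normal_map_aHom K
  have htop : ⊤ ∉ T.image (Subgroup.map (aHom n)) := by
    simp only [Finset.mem_image, not_exists, not_and]
    intro K _ hK
    exact xa_notMem_range_aHom 0 (Subgroup.map_le_range _ _ (hK ▸ Subgroup.mem_top _))
  rw [sigmaN, hS, Finset.sum_insert htop,
    Finset.sum_image fun K _ L _ h => Subgroup.map_injective aHom_injective h,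
    Subgroup.card_top, Nat.card_eq_fintype_card, QuaternionGroup.card, add_comm, sigmaN]
  simp only [Subgroup.card_map_of_injective aHom_injective, T]

end QuaternionGroup

theorem stmt4 : IsLeinster (QuaternionGroup 7 × Multiplicative (ZMod 13)) := by
  have hcop : (Fintype.card (QuaternionGroup 7)).Coprime
      (Fintype.card (Multiplicative (ZMod 13))) := by
    rw [QuaternionGroup.card, Fintype.card_multiplicative, ZMod.card]
    decide
  rw [IsLeinster, sigmaN_prod_of_coprime hcop, QuaternionGroup.sigmaN_eq_of_odd (by decide),
    sigmaN_eq_sigma_card_of_isCyclic, sigmaN_eq_sigma_card_of_isCyclic, Fintype.card_prod,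
    QuaternionGroup.card]
  simp only [Fintype.card_multiplicative, ZMod.card]
  decide
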